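/- If q* ∈ ℝ^r with nonnegative entries satisfies c(q*) + d = b(q*) = q*, then R(q*) equals the intersection of all sets in the family S = {R(q) : q ∈ ℝ^r, q ≥ 0, c(q) + d ≤ b(q) componentwise}; that is, R(q*) is the smallest member of the family of RPI sets representable with left-hand-side matrix P. -/

import Mathlib

/-!
Let `λ` be the largest scalar with `λ q* ≤ q` for a feasible `q`, and suppose `λ < 1`. Since `c` is
monotone and positively homogeneous, `q ≥ b(q) ≥ c(q) + d ≥ λ c(q*) + d = λ q* + (1 - λ) d`.
At an index where `λ q*` touches `q` we have `q*_i > 0`, so `P_i ≠ 0` and `d_i > 0` because `W` is a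
neighbourhood of the origin; this contradicts the maximality of `λ`. Hence `q* ≤ q`, and the
intersection is attained at `R(q*)`, which belongs to the family.
-/

open Matrix

/-- Support function `h(X, v) = sup {vᵀ x : x ∈ X}`. -/
noncomputable def suppFn {n : ℕ} (X : Set (Fin n → ℝ)) (v : Fin n → ℝ) : ℝ :=
  sSup ((fun x => v ⬝ᵥ x) '' X)

/-- `R(q) = {z : P z ≤ q}`. -/
def Rset {n r : ℕ} (P : Matrix (Fin r) (Fin n) ℝ) (q : Fin r → ℝ) : Set (Fin n → ℝ) :=
  {z : Fin n → ℝ | P.mulVec z ≤ q}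

/-- `b_i(q) = h(R(q), P_iᵀ)`. -/
noncomputable def bfun {n r : ℕ} (P : Matrix (Fin r) (Fin n) ℝ) (q : Fin r → ℝ) :
    Fin r → ℝ :=
  fun i => suppFn (Rset P q) (P i)

/-- `c_i(q) = h(A·R(q), P_iᵀ)`. -/
noncomputable def cfun {n r : ℕ} (A : Matrix (Fin n) (Fin n) ℝ)
    (P : Matrix (Fin r) (Fin n) ℝ) (q : Fin r → ℝ) : Fin r → ℝ :=
  fun i => suppFn (A.mulVec '' Rset P q) (P i)

/-- `d_i = h(W, P_iᵀ)` where `W = {w : F w ≤ g}`. -/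
noncomputable def dvec {n r p : ℕ} (F : Matrix (Fin p) (Fin n) ℝ) (g : Fin p → ℝ)
    (P : Matrix (Fin r) (Fin n) ℝ) : Fin r → ℝ :=
  fun i => suppFn {w : Fin n → ℝ | F.mulVec w ≤ g} (P i)

/-- `R` is robust positively invariant for `x⁺ = A x + w`, `w ∈ W`. -/
def IsRPI {n : ℕ} (A : Matrix (Fin n) (Fin n) ℝ) (W R : Set (Fin n → ℝ)) : Prop :=
  ∀ x ∈ R, ∀ w ∈ W, A.mulVec x + w ∈ R

open Set Filter Topology
open scoped Pointwise

section PosHomogeneous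

variable {E : Type*} [NormedAddCommGroup E] [NormedSpace ℝ E] [FiniteDimensional ℝ E] {f : E → ℝ}

theorem exists_pos_mul_norm_le_of_posHomogeneous (hf : Continuous f)
    (hhom : ∀ t : ℝ, 0 ≤ t → ∀ z, f (t • z) = t * f z) (hpos : ∀ z, z ≠ 0 → 0 < f z) :
    ∃ m > 0, ∀ z, m * ‖z‖ ≤ f z := by
  have hf0 : f 0 = 0 := by simpa using hhom 0 le_rfl 0
  rcases subsingleton_or_nontrivial E with _ | _
  · exact ⟨1, one_pos, fun z => by simp [Subsingleton.elim z 0, hf0]⟩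
  obtain ⟨z₀, hz₀, hmin⟩ := (isCompact_sphere (0 : E) 1).exists_isMinOn
    (NormedSpace.sphere_nonempty.2 zero_le_one) hf.continuousOn
  refine ⟨f z₀, hpos z₀ (ne_zero_of_mem_unit_sphere ⟨z₀, hz₀⟩), fun z => ?_⟩
  rcases eq_or_ne z 0 with rfl | hz
  · simp [hf0]
  have hnorm : 0 < ‖z‖ := norm_pos_iff.2 hz
  have hunit : ‖z‖⁻¹ • z ∈ Metric.sphere (0 : E) 1 := by
    simp [norm_smul, hnorm.ne']
  calc f z₀ * ‖z‖ ≤ f (‖z‖⁻¹ • z) * ‖z‖ := by gcongr; exact hmin hunit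
    _ = f z := by rw [hhom _ (inv_nonneg.2 hnorm.le)]; field_simp

theorem isBounded_setOf_le_of_posHomogeneous (hf : Continuous f)
    (hhom : ∀ t : ℝ, 0 ≤ t → ∀ z, f (t • z) = t * f z) (hpos : ∀ z, z ≠ 0 → 0 < f z) (c : ℝ) :
    Bornology.IsBounded {z | f z ≤ c} := by
  obtain ⟨m, hm, hle⟩ := exists_pos_mul_norm_le_of_posHomogeneous hf hhom hpos
  refine (Metric.isBounded_closedBall (x := (0 : E)) (r := c / m)).subset fun z hz => ?_
  rw [mem_closedBall_zero_iff, le_div_iff₀ hm]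
  linarith [hle z, show f z ≤ c from hz]

end PosHomogeneous

section SupportFunction

variable {n : ℕ} {X Y : Set (Fin n → ℝ)} {v : Fin n → ℝ}

theorem bddAbove_image_dotProduct (hX : IsCompact X) (v : Fin n → ℝ) :
    BddAbove ((fun x => v ⬝ᵥ x) '' X) :=
  (hX.image (continuous_const.dotProduct continuous_id)).bddAbove

theorem le_suppFn (hX : IsCompact X) {x : Fin n → ℝ} (hx : x ∈ X) : v ⬝ᵥ x ≤ suppFn X v :=
  le_csSup (bddAbove_image_dotProduct hX v) ⟨x, hx, rfl⟩

theorem suppFn_le {c : ℝ} (hc : 0 ≤ c) (h : ∀ x ∈ X, v ⬝ᵥ x ≤ c) : suppFn X v ≤ c :=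
  Real.sSup_le (by rintro _ ⟨x, hx, rfl⟩; exact h x hx) hc

theorem suppFn_mono (hXY : X ⊆ Y) (hX : X.Nonempty) (hY : IsCompact Y) :
    suppFn X v ≤ suppFn Y v :=
  csSup_le_csSup (bddAbove_image_dotProduct hY v) (hX.image _) (image_mono hXY)

theorem suppFn_smul {t : ℝ} (ht : 0 ≤ t) : suppFn (t • X) v = t * suppFn X v := by
  rw [suppFn, image_smul_comm _ _ _ fun x => dotProduct_smul t v x,
    Real.sSup_smul_of_nonneg ht, suppFn, smul_eq_mul]

theorem suppFn_zero_right : suppFn X 0 = 0 :=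
  le_antisymm (suppFn_le le_rfl fun x _ => by simp)
    (Real.sSup_nonneg <| by rintro _ ⟨x, _, rfl⟩; simp)

theorem suppFn_pos (hX : X ∈ 𝓝 0) (hXc : IsCompact X) (hv : v ≠ 0) : 0 < suppFn X v := by
  have hsmul : Tendsto (fun t : ℝ => t • v) (𝓝[>] 0) (𝓝 0) := by
    simpa using ((tendsto_id (x := 𝓝 (0 : ℝ))).smul_const v).mono_left nhdsWithin_le_nhds
  obtain ⟨t, htX, ht⟩ := ((hsmul.eventually hX).and self_mem_nhdsWithin).exists
  have hvv : 0 < v ⬝ᵥ v :=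
    lt_of_le_of_ne (Finset.sum_nonneg fun _ _ => mul_self_nonneg _)
      (Ne.symm (dotProduct_self_eq_zero.not.2 hv))
  calc 0 < t * (v ⬝ᵥ v) := mul_pos ht hvv
    _ = v ⬝ᵥ (t • v) := by rw [dotProduct_smul, smul_eq_mul]
    _ ≤ suppFn X v := le_suppFn hXc htX

end SupportFunction

section Polytope

variable {n r : ℕ} {P : Matrix (Fin r) (Fin n) ℝ} {q q' : Fin r → ℝ}

theorem Rset_mono (h : q ≤ q') : Rset P q ⊆ Rset P q' := fun _ hz => le_trans hz h

theorem zero_mem_Rset (hq : 0 ≤ q) : (0 : Fin n → ℝ) ∈ Rset P q := by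
  simpa [Rset] using hq

theorem smul_Rset_subset {t : ℝ} (ht : 0 ≤ t) : t • Rset P q ⊆ Rset P (t • q) := by
  rintro _ ⟨z, hz, rfl⟩
  simpa [Rset, mulVec_smul] using smul_le_smul_of_nonneg_left (show P *ᵥ z ≤ q from hz) ht

theorem isClosed_Rset (q : Fin r → ℝ) : IsClosed (Rset P q) :=
  isClosed_le (continuous_const.matrix_mulVec continuous_id) continuous_const

theorem isBounded_Rset (hP0 : {z : Fin n → ℝ | P *ᵥ z ≤ 0} = {0}) (q : Fin r → ℝ) :
    Bornology.IsBounded (Rset P q) := by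
  -- `∑ᵢ max (P z)ᵢ 0` is positively homogeneous and, by `hP0`, positive away from the origin.
  set f : (Fin n → ℝ) → ℝ := fun z => ∑ i, max ((P *ᵥ z) i) 0
  have hf : Continuous f := continuous_finsetSum _ fun i _ =>
    ((continuous_apply i).comp (continuous_const.matrix_mulVec continuous_id)).max continuous_const
  have hhom : ∀ t : ℝ, 0 ≤ t → ∀ z, f (t • z) = t * f z := fun t ht z => by
    simp only [f, mulVec_smul, Pi.smul_apply, smul_eq_mul, Finset.mul_sum]
    exact Finset.sum_congr rfl fun i _ => by rw [mul_max_of_nonneg _ _ ht, mul_zero]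
  have hpos : ∀ z, z ≠ 0 → 0 < f z := fun z hz => by
    have hnot : ¬ P *ᵥ z ≤ 0 := fun h => hz (hP0.subset h)
    obtain ⟨i, hi⟩ : ∃ i, 0 < (P *ᵥ z) i := by simpa [Pi.le_def] using hnot
    exact (lt_max_of_lt_left hi).trans_le
      (Finset.single_le_sum (f := fun i => max ((P *ᵥ z) i) 0) (fun _ _ => le_max_right _ _)
        (Finset.mem_univ i))
  refine (isBounded_setOf_le_of_posHomogeneous hf hhom hpos (∑ i, max (q i) 0)).subset
    fun z hz => Finset.sum_le_sum fun i _ => max_le_max (hz i) le_rfl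

theorem isCompact_Rset (hP0 : {z : Fin n → ℝ | P *ᵥ z ≤ 0} = {0}) (q : Fin r → ℝ) :
    IsCompact (Rset P q) :=
  Metric.isCompact_of_isClosed_isBounded (isClosed_Rset q) (isBounded_Rset hP0 q)

theorem bfun_le (hq : 0 ≤ q) : bfun P q ≤ q := fun i =>
  suppFn_le (hq i) fun _ hz => hz i

theorem mul_cfun_le_cfun (A : Matrix (Fin n) (Fin n) ℝ)
    (hP0 : {z : Fin n → ℝ | P *ᵥ z ≤ 0} = {0}) {t : ℝ} (ht : 0 ≤ t) (hq : 0 ≤ q)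
    (hle : t • q ≤ q') (i : Fin r) : t * cfun A P q i ≤ cfun A P q' i := by
  have himage : t • (A *ᵥ ·) '' Rset P q ⊆ (A *ᵥ ·) '' Rset P q' := by
    rw [← image_smul_comm _ _ _ fun x => mulVec_smul A t x]
    exact image_mono ((smul_Rset_subset ht).trans (Rset_mono hle))
  rw [cfun, cfun, ← suppFn_smul ht]
  exact suppFn_mono himage ((nonempty_of_mem (zero_mem_Rset hq)).image _).smul_set
    ((isCompact_Rset hP0 q').image (continuous_const.matrix_mulVec continuous_id))

end Polytope

theorem setOf_mulVec_le_mem_nhds_zero {n p : ℕ} (F : Matrix (Fin p) (Fin n) ℝ) {g : Fin p → ℝ}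
    (hg : ∀ j, 0 < g j) : {w : Fin n → ℝ | F *ᵥ w ≤ g} ∈ 𝓝 0 := by
  have hcont : Continuous fun w : Fin n → ℝ => F *ᵥ w :=
    continuous_const.matrix_mulVec continuous_id
  filter_upwards [eventually_all.2 fun j =>
    ((continuous_apply j).comp hcont).continuousAt.eventually_lt continuousAt_const
      (by simpa using hg j)] with w hw j using (hw j).le

theorem dvec_pos {n r p : ℕ} {F : Matrix (Fin p) (Fin n) ℝ} {g : Fin p → ℝ}
    (hg : ∀ j, 0 < g j) (hW : IsCompact {w : Fin n → ℝ | F *ᵥ w ≤ g})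
    {P : Matrix (Fin r) (Fin n) ℝ} {i : Fin r} (hPi : P i ≠ 0) : 0 < dvec F g P i :=
  suppFn_pos (setOf_mulVec_le_mem_nhds_zero F hg) hW hPi

theorem exists_smul_le_of_not_le {ι : Type*} [Fintype ι] {q q' : ι → ℝ} (hq : 0 ≤ q)
    (hq' : 0 ≤ q') (h : ¬ q' ≤ q) :
    ∃ t : ℝ, 0 ≤ t ∧ t < 1 ∧ t • q' ≤ q ∧ ∃ i, 0 < q' i ∧ q i = t * q' i := by
  obtain ⟨i, hi⟩ : ∃ i, q i < q' i := by simpa [Pi.le_def] using h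
  obtain ⟨i₀, hi₀, hmin⟩ := (Finset.univ.filter fun j => 0 < q' j).exists_min_image
    (fun j => q j / q' j) ⟨i, by simpa using (hq i).trans_lt hi⟩
  have hi₀ : 0 < q' i₀ := by simpa using hi₀
  have hratio : ∀ j, 0 < q' j → q i₀ / q' i₀ ≤ q j / q' j := fun j hj => hmin j (by simpa using hj)
  refine ⟨q i₀ / q' i₀, div_nonneg (hq i₀) hi₀.le, ?_, fun j => ?_, i₀, hi₀, ?_⟩
  · have hpos : 0 < q' i := (hq i).trans_lt hi
    exact (hratio i hpos).trans_lt ((div_lt_one hpos).2 hi)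
  · rcases (hq' j).lt_or_eq with hj | hj
    · simpa [smul_eq_mul] using (le_div_iff₀ hj).1 (hratio j hj)
    · simpa [← hj] using hq j
  · exact (div_mul_cancel₀ _ hi₀.ne').symm

theorem le_of_cfun_add_dvec_le_bfun {n r p : ℕ} {A : Matrix (Fin n) (Fin n) ℝ}
    {F : Matrix (Fin p) (Fin n) ℝ} {g : Fin p → ℝ} (hg : ∀ j, 0 < g j)
    (hW : IsCompact {w : Fin n → ℝ | F *ᵥ w ≤ g}) {P : Matrix (Fin r) (Fin n) ℝ}
    (hP0 : {z : Fin n → ℝ | P *ᵥ z ≤ 0} = {0}) {qs q : Fin r → ℝ} (hqs : 0 ≤ qs)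
    (hfix : cfun A P qs + dvec F g P = qs) (hq : 0 ≤ q)
    (hfeas : cfun A P q + dvec F g P ≤ bfun P q) : qs ≤ q := by
  by_contra hnot
  obtain ⟨t, ht0, ht1, hle, i, hqsi, hqi⟩ := exists_smul_le_of_not_le hq hqs hnot
  have hfixi : cfun A P qs i + dvec F g P i = qs i := congrFun hfix i
  have hPi : P i ≠ 0 := fun h => by
    simp only [cfun, dvec, h, suppFn_zero_right, add_zero] at hfixi
    exact hqsi.ne hfixi
  have hd := dvec_pos hg hW hPi
  have hc := mul_cfun_le_cfun A hP0 ht0 hqs hle i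
  have hfeasi : cfun A P q i + dvec F g P i ≤ q i := (hfeas i).trans (bfun_le hq i)
  -- `q i ≥ t c(qs) i + d i = t qs i + (1 - t) d i > t qs i = q i`
  nlinarith

theorem fixedPoint_Rset_eq_iInter_general
    (n r p : ℕ)
    (A : Matrix (Fin n) (Fin n) ℝ)
    (F : Matrix (Fin p) (Fin n) ℝ) (g : Fin p → ℝ)
    (hg : ∀ j, 0 < g j)
    (hWcompact : IsCompact {w : Fin n → ℝ | F.mulVec w ≤ g})
    (P : Matrix (Fin r) (Fin n) ℝ)
    (hP0 : {z : Fin n → ℝ | P.mulVec z ≤ 0} = {0})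
    (qs : Fin r → ℝ) (hqs : 0 ≤ qs)
    (hfix : cfun A P qs + dvec F g P = bfun P qs ∧ bfun P qs = qs) :
    Rset P qs =
      ⋂ q ∈ {q : Fin r → ℝ | 0 ≤ q ∧ cfun A P q + dvec F g P ≤ bfun P q}, Rset P q := by
  refine Subset.antisymm (subset_iInter₂ fun q hq => Rset_mono ?_)
    (biInter_subset_of_mem ⟨hqs, hfix.1.le⟩)
  exact le_of_cfun_add_dvec_le_bfun hg hWcompact hP0 hqs (hfix.1.trans hfix.2) hq.1 hq.2

/-- if `q*` is a nonnegative fixed point of `c(q) + d = b(q) = q`, then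
`R(q*)` is the intersection of the family `{R(q) : q ≥ 0, c(q) + d ≤ b(q)}`. -/
theorem fixedPoint_Rset_eq_iInter
    (n r p : ℕ)
    (A : Matrix (Fin n) (Fin n) ℝ)
    (F : Matrix (Fin p) (Fin n) ℝ) (g : Fin p → ℝ)
    (hg : ∀ j, 0 < g j)
    (hWcompact : IsCompact {w : Fin n → ℝ | F.mulVec w ≤ g})
    (P : Matrix (Fin r) (Fin n) ℝ)
    (hspan : Submodule.span ℝ (Set.range fun i => P i) = ⊤)
    (hP0 : {z : Fin n → ℝ | P.mulVec z ≤ 0} = {0})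
    (qs : Fin r → ℝ) (hqs : 0 ≤ qs)
    (hfix : cfun A P qs + dvec F g P = bfun P qs ∧ bfun P qs = qs) :
    Rset P qs =
      ⋂ q ∈ {q : Fin r → ℝ | 0 ≤ q ∧ cfun A P q + dvec F g P ≤ bfun P q}, Rset P q :=
  fixedPoint_Rset_eq_iInter_general n r p A F g hg hWcompact P hP0 qs hqs hfix
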